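/- arXiv:2308.15146 — 4 statements merged into one kernel-verified Lean document; each statement's English description precedes it below -/
import Mathlib

section
/- Let A ≥ 1, let a, c be nonzero integers, b an integer, and x₁, x₂ ≥ 1 real with |c| < x₂^A. Then the number of integers n with |n| ≤ x₁ such that gcd(a·n + b, c) > x₂ is O(x₁·gcd(a,c)/x₂^(1-ε) + τ(c)), where τ is the divisor function and the implied constant depends only on A and ε. -/
/-!
If `gcd(a n + b, c) > x₂`, then `d = gcd(a n + b, c)` is a divisor of `c` with `d > x₂` and
`d ∣ a n + b`. For fixed `d` the solutions of `d ∣ a n + b` form a single residue class modulo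
`d / gcd(a, d)`, so at most `3 x₁ gcd(a, c) / x₂ + 1` of them lie in `[-x₁, x₁]`. Summing over the
at most `τ(c)` such divisors and using the divisor bound `τ(c) ≪_δ |c|^δ` with `δ = ε / A`, which
gives `τ(c) ≪ x₂^ε`, yields the estimate.
-/

open scoped Classical

open Finset

theorem natCast_add_one_le_max_mul_pow {c : ℝ} (hc : 1 < c) (k : ℕ) :
    (k + 1 : ℝ) ≤ max 1 (c - 1)⁻¹ * c ^ k := by
  have hk : (k : ℝ) ≤ max 1 (c - 1)⁻¹ * (k * (c - 1)) :=
    calc (k : ℝ) = (c - 1)⁻¹ * (k * (c - 1)) := by field_simp [(sub_pos.mpr hc).ne']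
      _ ≤ _ := mul_le_mul_of_nonneg_right (le_max_right _ _) (by nlinarith)
  calc (k + 1 : ℝ) ≤ max 1 (c - 1)⁻¹ * (1 + k * (c - 1)) := by
        nlinarith [le_max_left 1 (c - 1)⁻¹]
    _ ≤ _ := mul_le_mul_of_nonneg_left (one_add_mul_sub_le_pow (by linarith) k)
        (zero_le_one.trans (le_max_left _ _))

namespace Nat

theorem rpow_eq_prod_primeFactors {n : ℕ} (hn : n ≠ 0) (δ : ℝ) :
    (n : ℝ) ^ δ = ∏ p ∈ n.primeFactors, ((p : ℝ) ^ δ) ^ n.factorization p := by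
  conv_lhs => rw [← prod_factorization_pow_eq_self hn]
  rw [Finsupp.prod, support_factorization, cast_prod,
    ← Real.finsetProd_rpow _ _ fun p _ => by positivity]
  refine prod_congr rfl fun p _ => ?_
  rw [cast_pow, ← Real.rpow_natCast, ← Real.rpow_natCast, ← Real.rpow_mul (by positivity),
    ← Real.rpow_mul (by positivity), mul_comm]

theorem card_divisors_le_prod_mul_rpow {n : ℕ} (hn : n ≠ 0) {δ : ℝ} {F : ℕ → ℝ}
    (hF : ∀ p k : ℕ, p.Prime → (k + 1 : ℝ) ≤ F p * ((p : ℝ) ^ δ) ^ k) :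
    (#n.divisors : ℝ) ≤ (∏ p ∈ n.primeFactors, F p) * n ^ δ := by
  rw [card_divisors hn, rpow_eq_prod_primeFactors hn, ← prod_mul_distrib]
  push_cast
  exact prod_le_prod (fun _ _ => by positivity) fun p hp => hF p _ (prime_of_mem_primeFactors hp)

theorem exists_card_divisors_le_mul_rpow {δ : ℝ} (hδ : 0 < δ) :
    ∃ K : ℝ, 1 ≤ K ∧ ∀ n : ℕ, n ≠ 0 → (#n.divisors : ℝ) ≤ K * n ^ δ := by
  -- `F p` bounds `(k + 1) / (p ^ k) ^ δ` uniformly in `k`, and equals `1` as soon as `p ^ δ ≥ 2`.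
  set F : ℕ → ℝ := fun p => max 1 ((p : ℝ) ^ δ - 1)⁻¹
  set P := ⌈(2 : ℝ) ^ δ⁻¹⌉₊
  have hF_one_le (p : ℕ) : 1 ≤ F p := le_max_left _ _
  have hF_eq_one (p : ℕ) (hp : P ≤ p) : F p = 1 := by
    have : 2 ≤ (p : ℝ) ^ δ :=
      calc (2 : ℝ) = ((2 : ℝ) ^ δ⁻¹) ^ δ := by
            rw [← Real.rpow_mul zero_le_two, inv_mul_cancel₀ hδ.ne', Real.rpow_one]
        _ ≤ (p : ℝ) ^ δ :=
            Real.rpow_le_rpow (by positivity) ((le_ceil _).trans (mod_cast hp)) hδ.le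
    exact max_eq_left (inv_le_one_of_one_le₀ (by linarith))
  refine ⟨∏ p ∈ range P, F p, one_le_prod fun p _ => hF_one_le p,
    fun n hn => (card_divisors_le_prod_mul_rpow (F := F) (δ := δ) hn fun p k hp => ?_).trans ?_⟩
  · exact natCast_add_one_le_max_mul_pow (Real.one_lt_rpow (mod_cast hp.one_lt) hδ) k
  · refine mul_le_mul_of_nonneg_right ?_ (by positivity)
    calc ∏ p ∈ n.primeFactors, F p = ∏ p ∈ n.primeFactors with p < P, F p :=
          (prod_filter_of_ne fun p _ h => not_le.mp fun hp => h (hF_eq_one p hp)).symm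
      _ ≤ ∏ p ∈ range P, F p :=
          prod_le_prod_of_subset_of_one_le (fun p hp => mem_range.mpr (mem_filter.mp hp).2)
            (fun p _ => zero_le_one.trans (hF_one_le p)) fun p _ _ => hF_one_le p

theorem exists_card_divisors_natAbs_le_mul_rpow {A ε : ℝ} (hA : 0 < A) (hε : 0 < ε) :
    ∃ K : ℝ, 1 ≤ K ∧ ∀ (c : ℤ) (x : ℝ), c ≠ 0 → 0 < x → (|c| : ℝ) < x ^ A →
      (#c.natAbs.divisors : ℝ) ≤ K * x ^ ε := by
  obtain ⟨K, hK, hτ⟩ := exists_card_divisors_le_mul_rpow (_root_.div_pos hε hA)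
  refine ⟨K, hK, fun c x hc hx hcx => ?_⟩
  calc (#c.natAbs.divisors : ℝ) ≤ K * (c.natAbs : ℝ) ^ (ε / A) := hτ _ (Int.natAbs_ne_zero.mpr hc)
    _ ≤ K * (x ^ A) ^ (ε / A) := by
        gcongr
        rw [cast_natAbs, Int.cast_abs]
        exact hcx.le
    _ = K * x ^ ε := by rw [← Real.rpow_mul hx.le, mul_div_cancel₀ _ hA.ne']

end Nat

namespace Int

theorem card_filter_modEq_Icc_le {m : ℤ} (hm : 0 < m) {lo hi : ℤ} (h : lo ≤ hi) (v : ℤ) :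
    (#{x ∈ Icc lo hi | x ≡ v [ZMOD m]} : ℝ) ≤ (hi - lo + 1) / m + 1 := by
  have hq : (#{x ∈ Icc lo hi | x ≡ v [ZMOD m]} : ℚ) ≤ (hi - lo + 1) / m + 1 := by
    have hcard := Ico_filter_modEq_card lo (hi + 1) hm v
    rw [Ico_add_one_right_eq_Icc] at hcard
    rw [← Int.cast_natCast, hcard]
    push_cast
    have hlen : (hi + 1 - v : ℚ) / m - (lo - v) / m = (hi - lo + 1) / m := by ring
    have hlen_nonneg : (0 : ℚ) ≤ (hi - lo + 1) / m :=
      div_nonneg (by linarith [(mod_cast h : (lo : ℚ) ≤ hi)]) (mod_cast hm.le)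
    exact max_le (by linarith [ceil_lt_add_one ((hi + 1 - v : ℚ) / m), le_ceil ((lo - v : ℚ) / m)])
      (by linarith)
  exact_mod_cast hq

theorem card_filter_dvd_mul_add_le {d : ℤ} (hd : 0 < d) (a b : ℤ) {lo hi : ℤ} (h : lo ≤ hi) :
    (#{n ∈ Icc lo hi | d ∣ a * n + b} : ℝ) ≤ (hi - lo + 1) * a.gcd d / d + 1 := by
  rcases eq_empty_or_nonempty {n ∈ Icc lo hi | d ∣ a * n + b} with hempty | ⟨n₀, hn₀⟩
  · rw [hempty, card_empty, Nat.cast_zero]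
    have hlen : (0 : ℝ) ≤ hi - lo + 1 := by linarith [(mod_cast h : (lo : ℝ) ≤ hi)]
    positivity
  have hg : (gcd d a : ℤ) ∣ d := gcd_dvd_left d a
  have hg_pos : (0 : ℤ) < gcd d a := mod_cast gcd_pos_of_ne_zero_left a hd.ne'
  have hm : 0 < d / gcd d a := ediv_pos_of_pos_of_dvd hd hg_pos.le hg
  have hsub : {n ∈ Icc lo hi | d ∣ a * n + b} ⊆ {n ∈ Icc lo hi | n ≡ n₀ [ZMOD d / gcd d a]} := by
    refine fun n hn => mem_filter.mpr ⟨(mem_filter.mp hn).1, ?_⟩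
    refine ModEq.cancel_left_div_gcd hd (modEq_iff_dvd.mpr ?_)
    have := dvd_sub (mem_filter.mp hn₀).2 (mem_filter.mp hn).2
    rwa [add_sub_add_right_eq_sub] at this
  calc (#{n ∈ Icc lo hi | d ∣ a * n + b} : ℝ)
      ≤ #{n ∈ Icc lo hi | n ≡ n₀ [ZMOD d / gcd d a]} := mod_cast card_le_card hsub
    _ ≤ (hi - lo + 1) / ((d / gcd d a : ℤ) : ℝ) + 1 := card_filter_modEq_Icc_le hm h n₀
    _ = (hi - lo + 1) * a.gcd d / d + 1 := by
      rw [cast_div hg (mod_cast hg_pos.ne'), gcd_comm]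
      push_cast
      field_simp

end Int

theorem card_filter_lt_gcd_le {c : ℤ} (hc : c ≠ 0) (a b : ℤ) {lo hi : ℤ} (h : lo ≤ hi) {y : ℝ}
    (hy : 0 < y) :
    (#{n ∈ Icc lo hi | y < ((a * n + b).gcd c : ℝ)} : ℝ) ≤
      #c.natAbs.divisors * ((hi - lo + 1) * a.gcd c / y + 1) := by
  have hlen : (0 : ℝ) ≤ hi - lo + 1 := by linarith [(mod_cast h : (lo : ℝ) ≤ hi)]
  set D := c.natAbs.divisors.filter fun d : ℕ => y < d
  have hcover : {n ∈ Icc lo hi | y < ((a * n + b).gcd c : ℝ)} ⊆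
      D.biUnion fun d => {n ∈ Icc lo hi | (d : ℤ) ∣ a * n + b} := by
    intro n hn
    rw [mem_filter] at hn
    refine mem_biUnion.mpr ⟨(a * n + b).gcd c, ?_, mem_filter.mpr ⟨hn.1, Int.gcd_dvd_left _ _⟩⟩
    exact mem_filter.mpr
      ⟨Nat.mem_divisors.mpr ⟨Nat.gcd_dvd_right _ _, Int.natAbs_ne_zero.mpr hc⟩, hn.2⟩
  have hterm : ∀ d ∈ D, (#{n ∈ Icc lo hi | (d : ℤ) ∣ a * n + b} : ℝ) ≤
      (hi - lo + 1) * a.gcd c / y + 1 := by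
    intro d hd
    obtain ⟨hdc, hyd⟩ := mem_filter.mp hd
    have hgcd : a.gcd d ≤ a.gcd c := Nat.le_of_dvd (Int.gcd_pos_of_ne_zero_right a hc)
      (Nat.gcd_dvd_gcd_of_dvd_right _ (Nat.dvd_of_mem_divisors hdc))
    refine (Int.card_filter_dvd_mul_add_le (mod_cast hy.trans hyd) a b h).trans ?_
    push_cast
    gcongr
  calc (#{n ∈ Icc lo hi | y < ((a * n + b).gcd c : ℝ)} : ℝ)
      ≤ ∑ d ∈ D, (#{n ∈ Icc lo hi | (d : ℤ) ∣ a * n + b} : ℝ) :=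
        mod_cast (card_le_card hcover).trans card_biUnion_le
    _ ≤ #D * ((hi - lo + 1) * a.gcd c / y + 1) := by
        rw [← nsmul_eq_mul, ← sum_const]
        exact sum_le_sum hterm
    _ ≤ _ := mul_le_mul_of_nonneg_right (mod_cast card_filter_le _ _) (by positivity)

/-- The number of `n` with `|n| ≤ x₁` and `gcd(a n + b, c) > x₂` is
`≪_{A,ε} x₁ gcd(a,c)/x₂^(1-ε) + τ(c)`, provided `|c| < x₂^A`. -/
theorem count_large_gcd (A ε : ℝ) (hA : 1 ≤ A) (hε : 0 < ε) :
    ∃ C : ℝ, 0 < C ∧ ∀ a b c : ℤ, a ≠ 0 → c ≠ 0 → ∀ x₁ x₂ : ℝ, 1 ≤ x₁ → 1 ≤ x₂ →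
      (|c| : ℝ) < x₂ ^ A →
      (((Finset.Icc (-⌊x₁⌋) ⌊x₁⌋).filter
          (fun n : ℤ => x₂ < ((a * n + b).gcd c : ℝ))).card : ℝ)
        ≤ C * (x₁ * (a.gcd c : ℝ) / x₂ ^ (1 - ε) + (c.natAbs.divisors.card : ℝ)) := by
  obtain ⟨K, hK, hτ_bound⟩ :=
    Nat.exists_card_divisors_natAbs_le_mul_rpow (by linarith : 0 < A) hε
  refine ⟨3 * K, by linarith, fun a b c _ hc x₁ x₂ hx₁ hx₂ hcx => ?_⟩
  set τ : ℝ := ((#c.natAbs.divisors : ℕ) : ℝ)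
  set g : ℝ := ((a.gcd c : ℕ) : ℝ)
  have hx₂_pos : 0 < x₂ := by linarith
  have hτ : τ ≤ K * x₂ ^ ε := hτ_bound c x₂ hc hx₂_pos hcx
  have hlen : (⌊x₁⌋ - -⌊x₁⌋ + 1 : ℝ) ≤ 3 * x₁ := by linarith [Int.floor_le x₁]
  have hfloor : -⌊x₁⌋ ≤ ⌊x₁⌋ := by have := Int.floor_nonneg.mpr (zero_le_one.trans hx₁); omega
  calc _ ≤ τ * (3 * x₁ * g / x₂ + 1) := by
        refine (card_filter_lt_gcd_le hc a b hfloor hx₂_pos).trans ?_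
        push_cast
        gcongr
    _ ≤ K * x₂ ^ ε * (3 * x₁ * g / x₂) + τ := by
        have : 0 ≤ 3 * x₁ * g / x₂ := by positivity
        nlinarith
    _ = 3 * K * (x₁ * g / x₂ ^ (1 - ε)) + τ := by
        rw [Real.rpow_sub hx₂_pos, Real.rpow_one]
        field_simp
    _ ≤ 3 * K * (x₁ * g / x₂ ^ (1 - ε) + τ) := by
        have : 0 ≤ τ := by positivity
        nlinarith
end

section
/- Let ε > 0, d ∈ ℕ, 0 < κ < d be fixed, x > 1, and let g ∈ ℤ[t] be a polynomial of degree at most d with g(0) ≠ 0. Define M to be the set of pairs (n₁, n₂) of positive integers with n₁, n₂ ≤ x such that: n₁, n₂ > x^(1-κ/d), |n₁ - n₂| > x^(1-κ/d), gcd(n₁, n₂) < x^(κ/d), and gcd(n₁^d, g(n₁)) < x^(κ+ε). Then the number of pairs (n₁, n₂) with 1 ≤ n₁, n₂ ≤ x that are NOT in M is O(x^(2-κ/d)). -/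
/-!
Union bound over the five conditions. Each of `n₁ ≤ t`, `n₂ ≤ t` and `|n₁ - n₂| ≤ t`, with
`t = x^(1-κ/d)`, cuts out `O(t x) = O(x^(2-κ/d))` pairs. A pair with `gcd(n₁, n₂) ≥ T`, where
`T = x^(κ/d)`, consists of two multiples of some `m ≥ T`, so there are at most
`∑_{m ≥ T} (x/m)² ≪ x²/T` of them. Finally `gcd(n^d, g(n))` divides `g(0)^d`, because
`n ∣ g(n) - g(0)`; so the last condition can only fail when `x` is bounded in terms of `g(0)`,
and then `x²` is at most a constant times `x^(2-κ/d)`.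
-/

open Finset Polynomial

theorem Int.gcd_pow_eval_dvd (d : ℕ) (g : ℤ[X]) (n : ℤ) :
    Int.gcd (n ^ d) (g.eval n) ∣ (g.eval 0).natAbs ^ d := by
  have hdvd : (Int.gcd n (g.eval n) : ℤ) ∣ g.eval 0 := by
    have h := (Int.gcd_dvd_left n (g.eval n)).trans (by simpa using sub_dvd_eval_sub n 0 g)
    simpa using dvd_sub (Int.gcd_dvd_right n (g.eval n)) h
  rw [Int.gcd_eq_natAbs, Int.natAbs_pow]
  exact gcd_pow_left_dvd_pow_gcd.trans (pow_dvd_pow_of_dvd (Int.natCast_dvd.mp hdvd) d)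

lemma card_filter_not_and_le {α : Type*} [DecidableEq α] (s : Finset α) (p q : α → Prop)
    [DecidablePred p] [DecidablePred q] :
    #{a ∈ s | ¬ (p a ∧ q a)} ≤ #{a ∈ s | ¬ p a} + #{a ∈ s | ¬ q a} :=
  calc #{a ∈ s | ¬ (p a ∧ q a)} ≤ #({a ∈ s | ¬ p a} ∪ {a ∈ s | ¬ q a}) :=
        card_le_card fun a => by simp only [mem_filter, mem_union]; tauto
    _ ≤ _ := card_union_le _ _

section PairCounting

variable {x : ℝ}

lemma card_Icc_one_floor_le (hx : 0 ≤ x) : (#(Icc 1 ⌊x⌋₊) : ℝ) ≤ x := by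
  simpa using Nat.floor_le hx

lemma card_Icc_filter_le_le (N : ℕ) {t : ℝ} (ht : 0 ≤ t) :
    (#{a ∈ Icc 1 N | ((a : ℕ) : ℝ) ≤ t} : ℝ) ≤ t :=
  calc (#{a ∈ Icc 1 N | ((a : ℕ) : ℝ) ≤ t} : ℝ) ≤ #(Icc 1 ⌊t⌋₊) := by
        gcongr
        intro a ha
        simp only [mem_filter, mem_Icc] at ha ⊢
        exact ⟨ha.1.1, Nat.le_floor ha.2⟩
    _ ≤ t := card_Icc_one_floor_le ht

lemma card_pairs_fst_le (hx : 0 ≤ x) {t : ℝ} (ht : 0 ≤ t) :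
    (#{p ∈ Icc 1 ⌊x⌋₊ ×ˢ Icc 1 ⌊x⌋₊ | (p.1 : ℝ) ≤ t} : ℝ) ≤ t * x := by
  rw [filter_product_left (fun a : ℕ => (a : ℝ) ≤ t), card_product, Nat.cast_mul]
  gcongr
  · exact card_Icc_filter_le_le _ ht
  · exact card_Icc_one_floor_le hx

lemma card_pairs_snd_le (hx : 0 ≤ x) {t : ℝ} (ht : 0 ≤ t) :
    (#{p ∈ Icc 1 ⌊x⌋₊ ×ˢ Icc 1 ⌊x⌋₊ | (p.2 : ℝ) ≤ t} : ℝ) ≤ x * t := by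
  rw [filter_product_right (fun a : ℕ => (a : ℝ) ≤ t), card_product, Nat.cast_mul]
  gcongr
  · exact card_Icc_one_floor_le hx
  · exact card_Icc_filter_le_le _ ht

lemma card_pairs_close_le (hx : 0 ≤ x) {t : ℝ} (ht : 0 ≤ t) :
    (#{p ∈ Icc 1 ⌊x⌋₊ ×ˢ Icc 1 ⌊x⌋₊ | |(p.1 : ℝ) - p.2| ≤ t} : ℝ) ≤ (2 * t + 1) * x := by
  set k := ⌊t⌋₊
  have hfiber : ∀ a ∈ Icc 1 ⌊x⌋₊,
      #{p ∈ {p ∈ Icc 1 ⌊x⌋₊ ×ˢ Icc 1 ⌊x⌋₊ | |(p.1 : ℝ) - p.2| ≤ t} | p.1 = a} ≤ 2 * k + 1 := by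
    intro a _
    calc _ ≤ #({a} ×ˢ Icc (a - k) (a + k)) := by
          gcongr
          rintro ⟨b, c⟩ h
          simp only [mem_filter, mem_product, mem_Icc, mem_singleton, abs_le] at h ⊢
          obtain ⟨⟨-, hlo, hhi⟩, rfl⟩ := h
          have hk := Nat.lt_floor_add_one t
          have h₁ : c < b + k + 1 := by exact_mod_cast (show (c : ℝ) < b + k + 1 by linarith)
          have h₂ : b < c + k + 1 := by exact_mod_cast (show (b : ℝ) < c + k + 1 by linarith)
          omega
      _ ≤ 2 * k + 1 := by simp only [card_product, card_singleton, Nat.card_Icc]; omega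
  have hcount := card_le_mul_card_image_of_maps_to
    (fun p hp => (mem_product.mp (mem_filter.mp hp).1).1) _ hfiber
  calc _ ≤ ((2 * k + 1 : ℕ) : ℝ) * #(Icc 1 ⌊x⌋₊) := by exact_mod_cast hcount
    _ ≤ (2 * t + 1) * x := by
        gcongr
        · push_cast; linarith [Nat.floor_le ht]
        · exact card_Icc_one_floor_le hx

lemma card_Icc_filter_dvd (N m : ℕ) : #{a ∈ Icc 1 N | m ∣ a} = N / m := by
  rw [← Nat.Ioc_filter_dvd_card_eq_div, ← Icc_add_one_left_eq_Ioc, zero_add]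

lemma sum_Icc_ceil_inv_sq_le {T : ℝ} (hT : 0 < T) (N : ℕ) :
    ∑ m ∈ Icc ⌈T⌉₊ N, ((m : ℝ) ^ 2)⁻¹ ≤ 2 / T := by
  have hM : 1 ≤ ⌈T⌉₊ := Nat.one_le_iff_ne_zero.mpr (Nat.ceil_pos.mpr hT).ne'
  calc ∑ m ∈ Icc ⌈T⌉₊ N, ((m : ℝ) ^ 2)⁻¹ ≤ ∑ m ∈ Ioo (⌈T⌉₊ - 1) (N + 1), ((m : ℝ) ^ 2)⁻¹ := by
        refine sum_le_sum_of_subset_of_nonneg (fun m hm => ?_) fun _ _ _ => by positivity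
        simp only [mem_Icc, mem_Ioo] at hm ⊢
        omega
    _ ≤ 2 / ((⌈T⌉₊ - 1 : ℕ) + 1) := sum_Ioo_inv_sq_le _ _
    _ ≤ 2 / T := by
        rw [Nat.cast_sub hM, Nat.cast_one, sub_add_cancel]
        gcongr
        exact Nat.le_ceil T

lemma card_pairs_gcd_ge_le (hx : 0 ≤ x) {T : ℝ} (hT : 0 < T) :
    (#{p ∈ Icc 1 ⌊x⌋₊ ×ˢ Icc 1 ⌊x⌋₊ | T ≤ Nat.gcd p.1 p.2} : ℝ) ≤ 2 * x ^ 2 / T := by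
  set N := ⌊x⌋₊
  let multiples (m : ℕ) : Finset ℕ := {a ∈ Icc 1 N | m ∣ a}
  have hcover : {p ∈ Icc 1 N ×ˢ Icc 1 N | T ≤ Nat.gcd p.1 p.2} ⊆
      (Icc ⌈T⌉₊ N).biUnion fun m => multiples m ×ˢ multiples m := by
    rintro ⟨a, b⟩ h
    simp only [multiples, mem_filter, mem_product, mem_Icc, mem_biUnion] at h ⊢
    obtain ⟨⟨⟨ha₁, ha₂⟩, hb⟩, hgcd⟩ := h
    exact ⟨Nat.gcd a b, ⟨Nat.ceil_le.mpr hgcd, (Nat.gcd_le_left b ha₁).trans ha₂⟩,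
      ⟨⟨ha₁, ha₂⟩, Nat.gcd_dvd_left a b⟩, ⟨hb, Nat.gcd_dvd_right a b⟩⟩
  calc (#{p ∈ Icc 1 N ×ˢ Icc 1 N | T ≤ Nat.gcd p.1 p.2} : ℝ)
      ≤ ∑ m ∈ Icc ⌈T⌉₊ N, ((N / m : ℕ) : ℝ) ^ 2 := by
        have h := (card_le_card hcover).trans card_biUnion_le
        simp only [card_product, multiples, card_Icc_filter_dvd] at h
        exact_mod_cast h.trans_eq (by simp only [sq])
    _ ≤ ∑ m ∈ Icc ⌈T⌉₊ N, x ^ 2 * ((m : ℝ) ^ 2)⁻¹ := by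
        gcongr with m
        rw [← div_eq_mul_inv, ← div_pow]
        gcongr
        exact Nat.cast_div_le.trans (by gcongr; exact Nat.floor_le hx)
    _ ≤ 2 * x ^ 2 / T := by
        rw [← mul_sum, mul_comm 2, mul_div_assoc]
        gcongr
        exact sum_Icc_ceil_inv_sq_le hT N

lemma card_pairs_le_sq (hx : 0 ≤ x) : (#(Icc 1 ⌊x⌋₊ ×ˢ Icc 1 ⌊x⌋₊) : ℝ) ≤ x ^ 2 := by
  rw [card_product, Nat.cast_mul, sq]
  gcongr <;> exact card_Icc_one_floor_le hx

lemma card_pairs_gcd_pow_eval_ge_le (d : ℕ) (g : ℤ[X]) (hg0 : g.eval 0 ≠ 0) (hx : 0 < x)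
    {a b : ℝ} (ha : 0 ≤ a) (hb : 0 < b) :
    (#{p ∈ Icc 1 ⌊x⌋₊ ×ˢ Icc 1 ⌊x⌋₊ | x ^ b ≤ Int.gcd ((p.1 : ℤ) ^ d) (g.eval (p.1 : ℤ))} : ℝ)
      ≤ ((((g.eval 0).natAbs ^ d : ℕ) : ℝ) ^ b⁻¹) ^ a * x ^ (2 - a) := by
  set G : ℕ := (g.eval 0).natAbs ^ d
  by_cases hxG : x ^ b ≤ G
  · have hxa : x ^ a ≤ ((G : ℝ) ^ b⁻¹) ^ a := by
      gcongr
      exact (Real.le_rpow_inv_iff_of_pos hx.le (by positivity) hb).mpr hxG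
    calc _ ≤ (#(Icc 1 ⌊x⌋₊ ×ˢ Icc 1 ⌊x⌋₊) : ℝ) := by gcongr; exact filter_subset _ _
      _ ≤ x ^ 2 := card_pairs_le_sq hx.le
      _ = x ^ a * x ^ (2 - a) := by rw [← Real.rpow_add hx, add_sub_cancel, Real.rpow_two]
      _ ≤ ((G : ℝ) ^ b⁻¹) ^ a * x ^ (2 - a) := by gcongr
  · have hG : 0 < G := pow_pos (Int.natAbs_pos.mpr hg0) d
    rw [filter_false_of_mem fun p _ h => hxG (h.trans (by
      exact_mod_cast Nat.le_of_dvd hG (Int.gcd_pow_eval_dvd d g p.1)))]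
    simp only [card_empty, Nat.cast_zero]
    positivity

end PairCounting

theorem typical_pairs_general (ε : ℝ) (hε : 0 < ε) (d : ℕ) (κ : ℝ) (hκ : 0 < κ) (hκd : κ < d)
    (g : Polynomial ℤ) (hg0 : g.eval 0 ≠ 0) :
    ∃ C : ℝ, 0 < C ∧ ∀ x : ℝ, 1 < x →
      (((((Finset.Icc 1 ⌊x⌋₊) ×ˢ (Finset.Icc 1 ⌊x⌋₊)).filter (fun n : ℕ × ℕ =>
          ¬ (x ^ (1 - κ / d) < (n.1 : ℝ) ∧ x ^ (1 - κ / d) < (n.2 : ℝ) ∧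
             x ^ (1 - κ / d) < |(n.1 : ℝ) - (n.2 : ℝ)| ∧
             (Nat.gcd n.1 n.2 : ℝ) < x ^ (κ / d) ∧
             (Int.gcd ((n.1 : ℤ) ^ d) (g.eval (n.1 : ℤ)) : ℝ) < x ^ (κ + ε)))).card : ℝ))
        ≤ C * x ^ (2 - κ / d) := by
  set C₅ := ((((g.eval 0).natAbs ^ d : ℕ) : ℝ) ^ (κ + ε)⁻¹) ^ (κ / d)
  refine ⟨7 + C₅, by positivity, fun x hx => ?_⟩
  have hx0 : 0 < x := by linarith
  have hκd_pos : 0 < κ / d := div_pos hκ (hκ.trans hκd)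
  have hκd_le : κ / d ≤ 1 := (div_le_one (hκ.trans hκd)).mpr hκd.le
  have ht : 1 ≤ x ^ (1 - κ / d) := Real.one_le_rpow hx.le (by linarith)
  have hT : 0 < x ^ (κ / d) := by positivity
  have htx : x ^ (1 - κ / d) * x = x ^ (2 - κ / d) := by
    rw [← Real.rpow_add_one hx0.ne']; ring_nf
  have hTx : x ^ 2 / x ^ (κ / d) = x ^ (2 - κ / d) := by
    rw [Real.rpow_sub hx0, Real.rpow_two]
  grw [card_filter_not_and_le, card_filter_not_and_le, card_filter_not_and_le,
    card_filter_not_and_le]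
  simp only [not_lt, Nat.cast_add]
  have h₁ := card_pairs_fst_le hx0.le (zero_le_one.trans ht)
  have h₂ := card_pairs_snd_le hx0.le (zero_le_one.trans ht)
  have h₃ := card_pairs_close_le hx0.le (zero_le_one.trans ht)
  have h₄ := card_pairs_gcd_ge_le hx0.le hT
  have h₅ := card_pairs_gcd_pow_eval_ge_le d g hg0 hx0 hκd_pos.le (by positivity : 0 < κ + ε)
  have hx_le : x ≤ x ^ (1 - κ / d) * x := le_mul_of_one_le_left hx0.le ht
  rw [mul_div_assoc, hTx] at h₄
  linarith

/-- All but `O(x^(2-κ/d))` pairs `(n₁,n₂) ∈ [1,x]²` satisfy the "typical" conditions: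
`n₁, n₂ > x^(1-κ/d)`, `|n₁-n₂| > x^(1-κ/d)`, `gcd(n₁,n₂) < x^(κ/d)` and
`gcd(n₁^d, g(n₁)) < x^(κ+ε)`. -/
theorem typical_pairs (ε : ℝ) (hε : 0 < ε) (d : ℕ) (κ : ℝ) (hκ : 0 < κ) (hκd : κ < d)
    (g : Polynomial ℤ) (hdeg : g.natDegree ≤ d) (hg0 : g.eval 0 ≠ 0) :
    ∃ C : ℝ, 0 < C ∧ ∀ x : ℝ, 1 < x →
      (((((Finset.Icc 1 ⌊x⌋₊) ×ˢ (Finset.Icc 1 ⌊x⌋₊)).filter (fun n : ℕ × ℕ =>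
          ¬ (x ^ (1 - κ / d) < (n.1 : ℝ) ∧ x ^ (1 - κ / d) < (n.2 : ℝ) ∧
             x ^ (1 - κ / d) < |(n.1 : ℝ) - (n.2 : ℝ)| ∧
             (Nat.gcd n.1 n.2 : ℝ) < x ^ (κ / d) ∧
             (Int.gcd ((n.1 : ℤ) ^ d) (g.eval (n.1 : ℤ)) : ℝ) < x ^ (κ + ε)))).card : ℝ))
        ≤ C * x ^ (2 - κ / d) :=
  typical_pairs_general ε hε d κ hκ hκd g hg0
end

section
/- For positive integers n₁ > n₂ and integers ℓ > k ≥ 0, one has gcd(n₁^k, n₁^(ℓ-k) - n₂^(ℓ-k)) ≤ gcd(n₁, n₂)^ℓ. -/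
/-! Write `n₁ = d a`, `n₂ = d b` with `d = gcd(n₁, n₂)` and `a, b` coprime, so that
`n₁^(ℓ-k) - n₂^(ℓ-k) = d^(ℓ-k) c` with `c = a^(ℓ-k) - b^(ℓ-k)` coprime to `a`. Then
`gcd(d^k a^k, c d^(ℓ-k))` divides `gcd(d^k a^k, c) · d^(ℓ-k) = gcd(d^k, c) · d^(ℓ-k)`, a divisor
of `d^ℓ`. -/

namespace Nat

theorem Coprime.coprime_pow_sub_pow {a b m : ℕ} (hab : a.Coprime b) (hba : b ≤ a) (hm : m ≠ 0) :
    a.Coprime (a ^ m - b ^ m) :=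
  have hpow : (a ^ m).Coprime (a ^ m - b ^ m) :=
    (coprime_self_sub_right (pow_le_pow_left' hba m)).mpr (hab.pow m m)
  hpow.coprime_dvd_left (dvd_pow_self a hm)

theorem gcd_mul_pow_mul_pow_sub_dvd {d a b k m : ℕ} (hab : a.Coprime b) (hba : b ≤ a)
    (hm : m ≠ 0) : gcd ((a * d) ^ k) ((a * d) ^ m - (b * d) ^ m) ∣ d ^ (k + m) := by
  set c := a ^ m - b ^ m
  have hsplit : (a * d) ^ m - (b * d) ^ m = c * d ^ m := by
    rw [mul_pow, mul_pow, ← Nat.sub_mul]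
  have hc : gcd ((a * d) ^ k) c ∣ d ^ k := by
    rw [mul_pow, ((hab.coprime_pow_sub_pow hba hm).pow_left k).gcd_mul_left_cancel]
    exact gcd_dvd_left _ _
  rw [hsplit, pow_add]
  exact (gcd_mul_right_dvd_mul_gcd _ _ _).trans (mul_dvd_mul hc (gcd_dvd_right _ _))

end Nat

theorem gcd_pow_sub_pow_le_general (n₁ n₂ k ℓ : ℕ) (hn : n₂ < n₁) (hkl : k < ℓ) :
    Nat.gcd (n₁ ^ k) (n₁ ^ (ℓ - k) - n₂ ^ (ℓ - k)) ≤ Nat.gcd n₁ n₂ ^ ℓ := by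
  have hd : 0 < Nat.gcd n₁ n₂ := Nat.gcd_pos_of_pos_left _ (n₂.zero_le.trans_lt hn)
  obtain ⟨a, b, hab, h₁, h₂⟩ := Nat.exists_coprime n₁ n₂
  set d := Nat.gcd n₁ n₂
  rw [h₁, h₂] at hn ⊢
  calc _ ≤ d ^ (k + (ℓ - k)) := Nat.le_of_dvd (pow_pos hd _) <|
        Nat.gcd_mul_pow_mul_pow_sub_dvd hab (le_of_mul_le_mul_right hn.le hd)
          (Nat.sub_ne_zero_of_lt hkl)
    _ = d ^ ℓ := by rw [Nat.add_sub_cancel' hkl.le]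

/-- For positive integers `n₁ > n₂` and `ℓ > k ≥ 0`,
`gcd(n₁^k, n₁^(ℓ-k) - n₂^(ℓ-k)) ≤ gcd(n₁, n₂)^ℓ`. -/
theorem gcd_pow_sub_pow_le (n₁ n₂ k ℓ : ℕ) (hn₂ : 0 < n₂) (hn : n₂ < n₁) (hkl : k < ℓ) :
    Nat.gcd (n₁ ^ k) (n₁ ^ (ℓ - k) - n₂ ^ (ℓ - k)) ≤ Nat.gcd n₁ n₂ ^ ℓ :=
  gcd_pow_sub_pow_le_general n₁ n₂ k ℓ hn hkl
end

section
/- Let g(n, a) = g(n) + a·n^ℓ where g ∈ ℤ[t] has degree at most d, g(0) ≠ 0, and ℓ ≥ 1. For each fixed value of a making deg g(·,a) = e ≥ 1 with nonzero leading coefficient, the discriminant of the polynomial obtained by varying the coefficient of n^k (for k < e) is a nonzero polynomial in that coefficient of degree at most 2e - 2, and hence vanishes for at most 2d - 2 values of that coefficient. Consequently, among the O(H) polynomials f(n) = a·n^k + b·n^ℓ + g(n) with |a|, |b| ≤ H for fixed b, at most O(1) fail to be square-free, so at most O(H) polynomials in the family fail to be square-free in total. -/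
/-!
If `f = a Xᵏ + h` has a double root `z`, then `z` is a root of `k h - X h'`, a nonzero
polynomial of degree at most `deg h` which does not involve `a`; and since `h(0) ≠ 0`, the root
`z` determines `a` through `a zᵏ = -h(z)`. Hence at most `deg h` values of `a` make `f`
non-square-free, and none unless `deg h ≥ 2`, which gives the bound `2 deg h - 2`. Summing over
`b`, only the single value of `b` cancelling the coefficient of `X^ℓ` in `g` can contribute more
than `2d - 2` values of `a`.
-/

open scoped Classical

open Polynomial

/-- A univariate integer polynomial is "not square-free" in the sense of being divisible by
the square of a nonconstant polynomial (equivalently, its discriminant vanishes). -/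
def PolyNotSquarefree (f : Polynomial ℤ) : Prop :=
  ∃ h : Polynomial ℤ, 0 < h.natDegree ∧ h ^ 2 ∣ f

open Finset

namespace Polynomial

theorem isRoot_and_isRoot_derivative_of_sq_dvd {R : Type*} [CommRing R] {p : R[X]} {z : R}
    (hp : (X - C z) ^ 2 ∣ p) : p.IsRoot z ∧ (derivative p).IsRoot z := by
  rcases eq_or_ne p 0 with rfl | hp0
  · simp
  · exact (one_lt_rootMultiplicity_iff_isRoot hp0).mp ((le_rootMultiplicity_iff hp0).mpr hp)

/-- Eliminating `a` between `f = a Xᵏ + h` and `X f' = k a Xᵏ + X h'`: a common root of `f` and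
`f'` is a root of `k h - X h'`, whatever `a` is. -/
noncomputable def monomialEliminant {R : Type*} [CommRing R] (k : ℕ) (h : R[X]) : R[X] :=
  C (k : R) * h - X * derivative h

section CommRing

variable {R : Type*} [CommRing R] (k : ℕ)

theorem coeff_monomialEliminant (h : R[X]) (n : ℕ) :
    (monomialEliminant k h).coeff n = ((k : R) - n) * h.coeff n := by
  unfold monomialEliminant
  cases n with
  | zero => simp
  | succ n => rw [coeff_sub, coeff_C_mul, coeff_X_mul, coeff_derivative]; push_cast; ring

theorem natDegree_monomialEliminant_le (h : R[X]) :
    (monomialEliminant k h).natDegree ≤ h.natDegree :=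
  natDegree_le_iff_coeff_eq_zero.mpr fun n hn => by
    rw [coeff_monomialEliminant, coeff_eq_zero_of_natDegree_lt (by exact_mod_cast hn), mul_zero]

theorem monomialEliminant_ne_zero [IsDomain R] [CharZero R] {h : R[X]} (h0 : h ≠ 0)
    (hk : k ≠ h.natDegree) : monomialEliminant k h ≠ 0 := fun hQ => by
  have := coeff_monomialEliminant k h h.natDegree
  rw [hQ, coeff_zero, eq_comm, mul_eq_zero, sub_eq_zero, Nat.cast_inj] at this
  exact this.elim hk (leadingCoeff_ne_zero.mpr h0)

theorem monomialEliminant_C_mul_X_pow_add (a : R) (h : R[X]) :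
    monomialEliminant k (C a * X ^ k + h) = monomialEliminant k h := by
  unfold monomialEliminant
  cases k with
  | zero => simp
  | succ k =>
    simp only [derivative_add, derivative_C_mul_X_pow, map_mul, map_natCast, Nat.add_sub_cancel]
    ring

theorem IsRoot.monomialEliminant {f : R[X]} {z : R} (hf : f.IsRoot z)
    (hf' : (derivative f).IsRoot z) : (monomialEliminant k f).IsRoot z := by
  simp_all [Polynomial.monomialEliminant, IsRoot]

theorem eq_of_isRoot_C_mul_X_pow_add [IsDomain R] {h : R[X]} (h0 : h.eval 0 ≠ 0) {a b z : R}
    (ha : (C a * X ^ k + h).IsRoot z) (hb : (C b * X ^ k + h).IsRoot z) : a = b := by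
  have hz : z ^ k ≠ 0 := fun hz => by
    obtain ⟨rfl, hk⟩ := pow_eq_zero_iff'.mp hz
    simp [IsRoot, hk] at ha
    exact h0 ha
  simp only [IsRoot, eval_add, eval_mul, eval_C, eval_pow, eval_X] at ha hb
  exact mul_right_cancel₀ hz (by linear_combination ha - hb)

end CommRing

end Polynomial

namespace PolyNotSquarefree

theorem exists_isRoot_derivative_map {K : Type*} [Field K] [IsAlgClosed K] [CharZero K]
    {f : ℤ[X]} (hf : PolyNotSquarefree f) :
    ∃ z : K, (f.map (Int.castRingHom K)).IsRoot z ∧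
      (derivative (f.map (Int.castRingHom K))).IsRoot z := by
  obtain ⟨p, hp, hdvd⟩ := hf
  have hdeg : (p.map (Int.castRingHom K)).degree ≠ 0 := by
    rw [degree_map_eq_of_injective (RingHom.injective_int _)]
    exact (natDegree_pos_iff_degree_pos.mp hp).ne'
  obtain ⟨z, hz⟩ := IsAlgClosed.exists_root _ hdeg
  refine ⟨z, isRoot_and_isRoot_derivative_of_sq_dvd ?_⟩
  calc (X - C z) ^ 2 ∣ (p.map (Int.castRingHom K)) ^ 2 :=
        pow_dvd_pow_of_dvd (dvd_iff_isRoot.mpr hz) 2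
    _ ∣ f.map (Int.castRingHom K) := by
        rw [← Polynomial.map_pow]
        exact Polynomial.map_dvd _ hdvd

theorem two_le_natDegree {f : ℤ[X]} (hf : PolyNotSquarefree f) (hf0 : f ≠ 0) :
    2 ≤ f.natDegree := by
  obtain ⟨p, hp, hdvd⟩ := hf
  have := natDegree_le_of_dvd hdvd hf0
  rw [natDegree_pow] at this
  omega

end PolyNotSquarefree

section MonomialPerturbation

variable {k : ℕ} {h : ℤ[X]}

theorem exists_mapsTo_roots_injOn_setOf_notSquarefree (hk : k ≠ h.natDegree)
    (h0 : h.eval 0 ≠ 0) :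
    ∃ ψ : ℤ → ℂ, Set.MapsTo ψ {a | PolyNotSquarefree (C a * X ^ k + h)}
        (monomialEliminant k (h.map (Int.castRingHom ℂ))).roots.toFinset ∧
      Set.InjOn ψ {a | PolyNotSquarefree (C a * X ^ k + h)} := by
  have hmap (a : ℤ) : (C a * X ^ k + h).map (Int.castRingHom ℂ) =
      C (a : ℂ) * X ^ k + h.map (Int.castRingHom ℂ) := by simp
  have h0' : (h.map (Int.castRingHom ℂ)).eval 0 ≠ 0 := by simpa [eval_zero_map] using h0
  have hQ : monomialEliminant k (h.map (Int.castRingHom ℂ)) ≠ 0 :=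
    monomialEliminant_ne_zero k (fun h' => h0' (by simp [h']))
      (by rwa [natDegree_map_eq_of_injective (RingHom.injective_int _)])
  choose! ψ hψ using fun a (ha : PolyNotSquarefree (C a * X ^ k + h)) =>
    ha.exists_isRoot_derivative_map (K := ℂ)
  refine ⟨ψ, fun a ha => ?_, fun a ha b hb hab => ?_⟩
  · obtain ⟨hroot, hroot'⟩ := hψ a ha
    rw [hmap] at hroot hroot'
    have := hroot.monomialEliminant k hroot'
    rw [monomialEliminant_C_mul_X_pow_add] at this
    simpa [mem_roots hQ] using this
  · have ha' := (hψ a ha).1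
    have hb' := (hψ b hb).1
    rw [hmap] at ha' hb'
    rw [hab] at ha'
    exact_mod_cast eq_of_isRoot_C_mul_X_pow_add k h0' ha' hb'

theorem setOf_notSquarefree_C_mul_X_pow_add_finite (hk : k ≠ h.natDegree)
    (h0 : h.eval 0 ≠ 0) : {a | PolyNotSquarefree (C a * X ^ k + h)}.Finite :=
  have ⟨_, hmaps, hinj⟩ := exists_mapsTo_roots_injOn_setOf_notSquarefree hk h0
  Set.Finite.of_injOn hmaps hinj (Finset.finite_toSet _)

theorem ncard_setOf_notSquarefree_C_mul_X_pow_add_le (hk : k ≠ h.natDegree)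
    (h0 : h.eval 0 ≠ 0) : {a | PolyNotSquarefree (C a * X ^ k + h)}.ncard ≤ h.natDegree := by
  obtain ⟨ψ, hmaps, hinj⟩ := exists_mapsTo_roots_injOn_setOf_notSquarefree hk h0
  calc _ ≤ (monomialEliminant k (h.map (Int.castRingHom ℂ))).roots.toFinset.card := by
        simpa using Set.ncard_le_ncard_of_injOn ψ hmaps hinj
    _ ≤ (monomialEliminant k (h.map (Int.castRingHom ℂ))).natDegree :=
        (Multiset.toFinset_card_le _).trans (card_roots' _)
    _ ≤ (h.map (Int.castRingHom ℂ)).natDegree := natDegree_monomialEliminant_le k _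
    _ = h.natDegree := natDegree_map_eq_of_injective (RingHom.injective_int _) h

theorem ncard_setOf_notSquarefree_C_mul_X_pow_add_le_two_mul (hk : k < h.natDegree)
    (h0 : h.eval 0 ≠ 0) :
    {a | PolyNotSquarefree (C a * X ^ k + h)}.ncard ≤ 2 * h.natDegree - 2 := by
  rcases Set.eq_empty_or_nonempty {a | PolyNotSquarefree (C a * X ^ k + h)} with hS | ⟨a, ha⟩
  · rw [hS, Set.ncard_empty]
    exact Nat.zero_le _
  have hdeg : (C a * X ^ k + h).natDegree = h.natDegree :=
    natDegree_add_eq_right_of_natDegree_lt ((natDegree_C_mul_X_pow_le a k).trans_lt hk)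
  have := ha.two_le_natDegree (ne_zero_of_natDegree_gt (hdeg ▸ hk))
  have := ncard_setOf_notSquarefree_C_mul_X_pow_add_le hk.ne h0
  omega

end MonomialPerturbation

theorem Finset.card_filter_product_le_of_card_fiber_le {α β : Type*} [DecidableEq β]
    (s : Finset α) (t : Finset β) (P : α × β → Prop) [DecidablePred P] (b₀ : β) (m : ℕ)
    (hm : ∀ b ∈ t, b ≠ b₀ → #{a ∈ s | P (a, b)} ≤ m) :
    #{p ∈ s ×ˢ t | P p} ≤ #s + #t * m := by
  calc #{p ∈ s ×ˢ t | P p} = ∑ b ∈ t, #{a ∈ s | P (a, b)} := by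
        simp only [Finset.card_filter, Finset.sum_product_right]
    _ ≤ ∑ b ∈ t, (m + if b = b₀ then #s else 0) := by
        refine Finset.sum_le_sum fun b hb => ?_
        split_ifs with hb₀
        · exact (Finset.card_filter_le _ _).trans (Nat.le_add_left _ _)
        · exact hm b hb hb₀
    _ ≤ #s + #t * m := by
        rw [Finset.sum_add_distrib, Finset.sum_ite_eq', Finset.sum_const, smul_eq_mul]
        split_ifs <;> omega

theorem card_Icc_neg_floor_floor_le {H : ℝ} (hH : 1 ≤ H) :
    (#(Finset.Icc (-⌊H⌋) ⌊H⌋) : ℝ) ≤ 3 * H := by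
  have h1 : (1 : ℤ) ≤ ⌊H⌋ := Int.le_floor.mpr (by simpa using hH)
  have hcard : (#(Finset.Icc (-⌊H⌋) ⌊H⌋) : ℤ) = 2 * ⌊H⌋ + 1 := by
    rw [Int.card_Icc, Int.toNat_of_nonneg (by omega)]
    ring
  have hcard' : (#(Finset.Icc (-⌊H⌋) ⌊H⌋) : ℝ) = 2 * ⌊H⌋ + 1 := by exact_mod_cast hcard
  have : (1 : ℝ) ≤ ⌊H⌋ := by exact_mod_cast h1
  linarith [Int.floor_le H]

section Family

variable {d ℓ k : ℕ} {g : ℤ[X]}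

theorem setOf_notSquarefree_family_finite_and_ncard_le (hℓ : ℓ ≠ 0) (hld : ℓ ≤ d)
    (hdeg : g.natDegree ≤ d) (hg0 : g.eval 0 ≠ 0) {b : ℤ}
    (hk : k < (C b * X ^ ℓ + g).natDegree) :
    {a : ℤ | PolyNotSquarefree (C a * X ^ k + C b * X ^ ℓ + g)}.Finite ∧
      {a : ℤ | PolyNotSquarefree (C a * X ^ k + C b * X ^ ℓ + g)}.ncard ≤ 2 * d - 2 := by
  have h0 : (C b * X ^ ℓ + g).eval 0 ≠ 0 := by simpa [zero_pow hℓ] using hg0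
  have hd : (C b * X ^ ℓ + g).natDegree ≤ d :=
    natDegree_add_le_of_degree_le ((natDegree_C_mul_X_pow_le b ℓ).trans hld) hdeg
  simp only [add_assoc]
  exact ⟨setOf_notSquarefree_C_mul_X_pow_add_finite hk.ne h0,
    (ncard_setOf_notSquarefree_C_mul_X_pow_add_le_two_mul hk h0).trans (by omega)⟩

theorem card_filter_notSquarefree_family_le (hkl : k < ℓ) (hld : ℓ ≤ d)
    (hdeg : g.natDegree ≤ d) (hg0 : g.eval 0 ≠ 0) (s : Finset ℤ) {b : ℤ}
    (hb : b ≠ -g.coeff ℓ) :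
    #{a ∈ s | PolyNotSquarefree (C a * X ^ k + C b * X ^ ℓ + g)} ≤ 2 * d - 2 := by
  have hk : k < (C b * X ^ ℓ + g).natDegree :=
    hkl.trans_le (le_natDegree_of_ne_zero (by simp; omega))
  obtain ⟨hfin, hcard⟩ :=
    setOf_notSquarefree_family_finite_and_ncard_le (by omega) hld hdeg hg0 hk
  rw [← Set.ncard_coe_finset]
  exact (Set.ncard_le_ncard (fun a ha => (Finset.mem_filter.mp ha).2) hfin).trans hcard

end Family

theorem family_mostly_squarefree_general (d ℓ k : ℕ) (hkl : k < ℓ) (hld : ℓ ≤ d)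
    (g : Polynomial ℤ) (hdeg : g.natDegree ≤ d) (hg0 : g.eval 0 ≠ 0) :
    (∀ b : ℤ, ∀ e : ℕ, e = (C b * X ^ ℓ + g).natDegree → 1 ≤ e → k < e →
      {a : ℤ | PolyNotSquarefree (C a * X ^ k + C b * X ^ ℓ + g)}.Finite ∧
      Nat.card {a : ℤ | PolyNotSquarefree (C a * X ^ k + C b * X ^ ℓ + g)} ≤ 2 * d - 2) ∧
    ∃ Cst : ℝ, 0 < Cst ∧ ∀ H : ℝ, 1 ≤ H →
      ((((Finset.Icc (-⌊H⌋) ⌊H⌋) ×ˢ (Finset.Icc (-⌊H⌋) ⌊H⌋)).filter (fun p : ℤ × ℤ =>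
          PolyNotSquarefree (C p.1 * X ^ k + C p.2 * X ^ ℓ + g))).card : ℝ)
        ≤ Cst * H := by
  refine ⟨fun b e he _ hke => ?_, 3 * ((2 * d - 2 : ℕ) + 1), by positivity, fun H hH => ?_⟩
  · rw [Nat.card_coe_set_eq]
    exact setOf_notSquarefree_family_finite_and_ncard_le (by omega) hld hdeg hg0 (he ▸ hke)
  have hcount := Finset.card_filter_product_le_of_card_fiber_le (Finset.Icc (-⌊H⌋) ⌊H⌋)
    (Finset.Icc (-⌊H⌋) ⌊H⌋)
    (fun p : ℤ × ℤ => PolyNotSquarefree (C p.1 * X ^ k + C p.2 * X ^ ℓ + g)) (-g.coeff ℓ)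
    (2 * d - 2) fun b _ hb => card_filter_notSquarefree_family_le hkl hld hdeg hg0 _ hb
  calc (_ : ℝ) ≤ #(Finset.Icc (-⌊H⌋) ⌊H⌋) * ((2 * d - 2 : ℕ) + 1) := by
        have := (Nat.cast_le (α := ℝ)).mpr hcount
        push_cast at this
        linarith
    _ ≤ 3 * H * ((2 * d - 2 : ℕ) + 1) := by gcongr; exact card_Icc_neg_floor_floor_le hH
    _ = _ := by ring

/-- In the family `f = a·Xᵏ + b·X^ℓ + g` with `deg g ≤ d`, `g(0) ≠ 0` and `1 ≤ ℓ`, `k < ℓ ≤ d`: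
for each fixed `b` with `e = deg(b·X^ℓ + g) ≥ 1` and `k < e`, at most `2d - 2` values of `a`
give a non-square-free polynomial (the discriminant, a nonzero polynomial of degree at most
`2e - 2` in the coefficient of `Xᵏ`, must vanish); consequently at most `O(H)` of the
polynomials with `|a|, |b| ≤ H` fail to be square-free. -/
theorem family_mostly_squarefree (d ℓ k : ℕ) (hℓ : 1 ≤ ℓ) (hkl : k < ℓ) (hld : ℓ ≤ d)
    (g : Polynomial ℤ) (hdeg : g.natDegree ≤ d) (hg0 : g.eval 0 ≠ 0) :
    (∀ b : ℤ, ∀ e : ℕ, e = (C b * X ^ ℓ + g).natDegree → 1 ≤ e → k < e →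
      {a : ℤ | PolyNotSquarefree (C a * X ^ k + C b * X ^ ℓ + g)}.Finite ∧
      Nat.card {a : ℤ | PolyNotSquarefree (C a * X ^ k + C b * X ^ ℓ + g)} ≤ 2 * d - 2) ∧
    ∃ Cst : ℝ, 0 < Cst ∧ ∀ H : ℝ, 1 ≤ H →
      ((((Finset.Icc (-⌊H⌋) ⌊H⌋) ×ˢ (Finset.Icc (-⌊H⌋) ⌊H⌋)).filter (fun p : ℤ × ℤ =>
          PolyNotSquarefree (C p.1 * X ^ k + C p.2 * X ^ ℓ + g))).card : ℝ)
        ≤ Cst * H :=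
  family_mostly_squarefree_general d ℓ k hkl hld g hdeg hg0
end
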